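/- arXiv:1611.06460 — 2 statements merged into one kernel-verified Lean document; each statement's English description precedes it below -/
import Mathlib

section
/- If G is a connected graph with a t-split graph G^t, and F is an h-edge-cut of G, then F^t = ∪_{e∈F} E_e is an h-edge-cut of G^t; consequently λ_s^{(h)}(G^t) ≤ t·λ_s^{(h)}(G). -/
open SimpleGraph

/-- `q` is a swap-neighbor of `p` in the (n,k)-star graph: it is obtained from `p`
by swapping the first digit with the `i`-th digit for some `i ≠ 0`. -/
def swapAdj {n k : ℕ} [NeZero k] (p q : Fin k ↪ Fin n) : Prop :=
  ∃ i : Fin k, i ≠ 0 ∧ q 0 = p i ∧ q i = p 0 ∧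
    ∀ j : Fin k, j ≠ 0 → j ≠ i → q j = p j

/-- `q` is an unswap-neighbor of `p`: obtained by replacing the first digit of `p`
by a symbol not occurring in `p`. -/
def unswapAdj {n k : ℕ} [NeZero k] (p q : Fin k ↪ Fin n) : Prop :=
  (∀ j : Fin k, j ≠ 0 → q j = p j) ∧ ∀ j : Fin k, q 0 ≠ p j

/-- The (n,k)-star graph `S_{n,k}` on the k-arrangements of an n-set. -/
def nkStar (n k : ℕ) [NeZero k] : SimpleGraph (Fin k ↪ Fin n) :=
  SimpleGraph.fromRel (fun p q => swapAdj p q ∨ unswapAdj p q)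

/-- The n-dimensional star graph `S_n` on permutations, adjacency by swapping the
first digit with the `i`-th digit, `i ≠ 0`. -/
def starGraph (n : ℕ) [NeZero n] : SimpleGraph (Equiv.Perm (Fin n)) :=
  SimpleGraph.fromRel (fun p q => ∃ i : Fin n, i ≠ 0 ∧ q = p * Equiv.swap 0 i)

/-- `T` is an h-vertex-cut: `G - T` is disconnected and has minimum degree at least `h`. -/
def IsHVertexCut {V : Type*} (G : SimpleGraph V) (h : ℕ) (T : Set V) : Prop :=
  ¬ (G.induce Tᶜ).Connected ∧ ∀ v, v ∉ T → h ≤ (G.neighborSet v \ T).ncard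

/-- The h-super connectivity `κ_s^{(h)}(G)`. -/
noncomputable def kappaS {V : Type*} (G : SimpleGraph V) (h : ℕ) : ℕ :=
  sInf {m | ∃ T : Set V, IsHVertexCut G h T ∧ T.ncard = m}

/-- `F` is an h-edge-cut: `G - F` is disconnected and has minimum degree at least `h`. -/
def IsHEdgeCut {V : Type*} (G : SimpleGraph V) (h : ℕ) (F : Set (Sym2 V)) : Prop :=
  F ⊆ G.edgeSet ∧ ¬ (G.deleteEdges F).Connected ∧
    ∀ v : V, h ≤ ((G.deleteEdges F).neighborSet v).ncard

/-- The h-super edge-connectivity `λ_s^{(h)}(G)`. -/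
noncomputable def lambdaS {V : Type*} (G : SimpleGraph V) (h : ℕ) : ℕ :=
  sInf {m | ∃ F : Set (Sym2 V), IsHEdgeCut G h F ∧ F.ncard = m}

/-- `G'` together with the projection `π` is a `t`-split graph of `G`: fibers of `π`
have size `t` and are independent, `π` is a graph homomorphism, and over each edge of
`G` the edges of `G'` form a perfect matching between the two fibers. -/
structure IsSplitGraph {V W : Type*} (G : SimpleGraph V) (t : ℕ)
    (G' : SimpleGraph W) (π : W → V) : Prop where
  fiber_card : ∀ v : V, Nat.card (π ⁻¹' {v}) = t
  indep : ∀ x y : W, π x = π y → ¬ G'.Adj x y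
  adj_map : ∀ x y : W, G'.Adj x y → G.Adj (π x) (π y)
  matching : ∀ (x : W) (v : V), G.Adj (π x) v → ∃! z : W, π z = v ∧ G'.Adj x z

/-- The prefix map sending a permutation of `{1,...,n}` to its length-`k` prefix. -/
def prefixMap (n k : ℕ) (hkn : k ≤ n) (p : Equiv.Perm (Fin n)) : Fin k ↪ Fin n :=
  (Fin.castLEEmb hkn).trans p.toEmbedding

/-- The set `X` of k-arrangements whose last `n-1-h` digits are `1,2,...,n-1-h` in order. -/
def lastFixed (n k h : ℕ) : Set (Fin k ↪ Fin n) :=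
  {u | ∀ i : Fin k, k - (n - 1 - h) ≤ i.val → (u i).val = i.val - (k - (n - 1 - h))}

/-! Deleting the lift `F^t` of `F` from `G^t` leaves a `t`-split graph of `G - F`. In any split
graph the matching condition makes `π` a bijection from the neighbourhood of `x` onto that of
`π x`, so degrees are preserved, and `π` is a surjective homomorphism, so connectivity of the
split graph would push down to the base. Hence `F^t` is an `h`-edge-cut. Each edge of `G` has at
most `t` lifts, one per vertex above a fixed endpoint, so `|F^t| ≤ t |F|`; applied to a minimum
`h`-edge-cut this bounds `λ_s^{(h)}(G^t)`. -/

namespace IsSplitGraph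

variable {V W : Type*} {G : SimpleGraph V} {t : ℕ} {G' : SimpleGraph W} {π : W → V}

lemma eq_of_adj_of_map_eq (hs : IsSplitGraph G t G' π) {x y z : W}
    (hxy : G'.Adj x y) (hxz : G'.Adj x z) (hyz : π y = π z) : y = z :=
  (hs.matching x (π z) (hyz ▸ hs.adj_map x y hxy)).unique ⟨hyz, hxy⟩ ⟨rfl, hxz⟩

lemma surjective [Finite W] [Nonempty W] (hs : IsSplitGraph G t G' π) :
    Function.Surjective π := by
  intro v
  obtain ⟨w⟩ := ‹Nonempty W›
  have : Nonempty (π ⁻¹' {π w}) := ⟨⟨w, rfl⟩⟩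
  have ht : 0 < t := hs.fiber_card (π w) ▸ Nat.card_pos
  obtain ⟨⟨x, hx⟩⟩ := (Nat.card_pos_iff.mp (hs.fiber_card v ▸ ht)).1
  exact ⟨x, hx⟩

lemma connected [Finite W] (hs : IsSplitGraph G t G' π) (hconn : G'.Connected) :
    G.Connected :=
  have := hconn.nonempty
  hconn.map ⟨π, hs.adj_map _ _⟩ hs.surjective

lemma ncard_neighborSet (hs : IsSplitGraph G t G' π) (x : W) :
    (G'.neighborSet x).ncard = (G.neighborSet (π x)).ncard := by
  have himage : π '' G'.neighborSet x = G.neighborSet (π x) := by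
    ext v
    refine ⟨fun ⟨z, hz, hzv⟩ => hzv ▸ hs.adj_map x z hz, fun hv => ?_⟩
    obtain ⟨z, ⟨hzv, hxz⟩, -⟩ := hs.matching x v hv
    exact ⟨z, hxz, hzv⟩
  have hinj : Set.InjOn π (G'.neighborSet x) := fun _ hy _ hz => hs.eq_of_adj_of_map_eq hy hz
  rw [← himage, hinj.ncard_image]

lemma deleteEdges (hs : IsSplitGraph G t G' π) (F : Set (Sym2 V)) :
    IsSplitGraph (G.deleteEdges F) t (G'.deleteEdges (G'.edgeSet ∩ Sym2.map π ⁻¹' F)) π where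
  fiber_card := hs.fiber_card
  indep x y hxy hadj := hs.indep x y hxy (deleteEdges_le _ hadj)
  adj_map x y hxy := by
    rw [deleteEdges_adj] at hxy ⊢
    exact ⟨hs.adj_map x y hxy.1, fun hF => hxy.2 ⟨hxy.1, hF⟩⟩
  matching x v hv := by
    rw [deleteEdges_adj] at hv
    obtain ⟨z, ⟨hzv, hxz⟩, huniq⟩ := hs.matching x v hv.1
    refine ⟨z, ⟨hzv, ?_⟩, fun y hy => huniq y ⟨hy.1, deleteEdges_le _ hy.2⟩⟩
    rw [deleteEdges_adj]
    exact ⟨hxz, fun hF => hv.2 (hzv ▸ hF.2)⟩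

lemma isHEdgeCut_preimage [Finite W] (hs : IsSplitGraph G t G' π) {h : ℕ}
    {F : Set (Sym2 V)} (hF : IsHEdgeCut G h F) :
    IsHEdgeCut G' h (G'.edgeSet ∩ Sym2.map π ⁻¹' F) :=
  ⟨Set.inter_subset_left, fun hconn => hF.2.1 ((hs.deleteEdges F).connected hconn),
    fun x => (hs.deleteEdges F).ncard_neighborSet x ▸ hF.2.2 (π x)⟩

lemma ncard_edges_over_le [Finite W] (hs : IsSplitGraph G t G' π) {e : Sym2 V}
    (he : e ∈ G.edgeSet) : {e' ∈ G'.edgeSet | Sym2.map π e' = e}.ncard ≤ t := by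
  induction e using Sym2.ind with | _ u v => ?_
  -- an edge over `uv` is determined by its endpoint above `u`
  have hfiber (x : π ⁻¹' {u}) : G.Adj (π x) v := by rw [Set.mem_singleton_iff.mp x.2]; exact he
  choose m hm using fun x : π ⁻¹' {u} => (hs.matching x v (hfiber x)).exists
  have hsub : {e' ∈ G'.edgeSet | Sym2.map π e' = s(u, v)} ⊆
      Set.range fun x : π ⁻¹' {u} => s(x.1, m x) := by
    rintro e' ⟨he', hmap⟩
    induction e' using Sym2.ind with | _ a b => ?_
    rw [Sym2.map_mk, Sym2.eq_iff] at hmap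
    rcases hmap with ⟨ha, hb⟩ | ⟨hb, ha⟩
    · exact ⟨⟨a, ha⟩, congrArg (s(a, ·))
        (hs.eq_of_adj_of_map_eq he' (hm ⟨a, ha⟩).2 (hb.trans (hm _).1.symm)).symm⟩
    · exact ⟨⟨b, ha⟩, (congrArg (s(b, ·))
        (hs.eq_of_adj_of_map_eq he'.symm (hm ⟨b, ha⟩).2 (hb.trans (hm _).1.symm)).symm).trans
        Sym2.eq_swap⟩
  calc _ ≤ (Set.range fun x : π ⁻¹' {u} => s(x.1, m x)).ncard := Set.ncard_le_ncard hsub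
    _ ≤ Nat.card (π ⁻¹' {u}) := by
      rw [← Set.image_univ, ← Set.ncard_univ]
      exact Set.ncard_image_le
    _ = t := hs.fiber_card u

lemma ncard_edgeSet_inter_preimage_le [Finite V] [Finite W] (hs : IsSplitGraph G t G' π)
    {F : Set (Sym2 V)} (hF : F ⊆ G.edgeSet) :
    (G'.edgeSet ∩ Sym2.map π ⁻¹' F).ncard ≤ t * F.ncard := by
  classical
  cases nonempty_fintype V
  cases nonempty_fintype W
  rw [Set.ncard_eq_toFinset_card', Set.ncard_eq_toFinset_card']
  refine Finset.card_le_mul_card_image_of_maps_to (f := Sym2.map π) (fun e' he' => ?_) t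
    fun e he => ?_
  · simpa using (Set.mem_toFinset.mp he').2
  · rw [← Set.ncard_coe_finset]
    refine (Set.ncard_le_ncard fun e' he' => ?_).trans
      (hs.ncard_edges_over_le (hF (Set.mem_toFinset.mp he)))
    simp only [Finset.coe_filter, Set.mem_toFinset] at he'
    exact ⟨he'.1.1, he'.2⟩

end IsSplitGraph

lemma lambdaS_le_ncard {V : Type*} {G : SimpleGraph V} {h : ℕ} {F : Set (Sym2 V)}
    (hF : IsHEdgeCut G h F) : lambdaS G h ≤ F.ncard :=
  Nat.sInf_le (show F.ncard ∈ {m | ∃ F, IsHEdgeCut G h F ∧ F.ncard = m} from ⟨F, hF, rfl⟩)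

lemma exists_isHEdgeCut_ncard_eq_lambdaS {V : Type*} {G : SimpleGraph V} {h : ℕ}
    {F : Set (Sym2 V)} (hF : IsHEdgeCut G h F) :
    ∃ F₀ : Set (Sym2 V), IsHEdgeCut G h F₀ ∧ F₀.ncard = lambdaS G h :=
  Nat.sInf_mem (s := {m | ∃ F, IsHEdgeCut G h F ∧ F.ncard = m}) ⟨F.ncard, F, hF, rfl⟩

theorem split_edge_cut_general {V W : Type*} [Fintype V] [Fintype W]
    (G : SimpleGraph V) (t h : ℕ) (G' : SimpleGraph W) (π : W → V)
    (hsplit : IsSplitGraph G t G' π)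
    (F : Set (Sym2 V)) (hF : IsHEdgeCut G h F) :
    IsHEdgeCut G' h (G'.edgeSet ∩ (Sym2.map π) ⁻¹' F) ∧
      lambdaS G' h ≤ t * lambdaS G h := by
  refine ⟨hsplit.isHEdgeCut_preimage hF, ?_⟩
  obtain ⟨F₀, hF₀, hcard⟩ := exists_isHEdgeCut_ncard_eq_lambdaS hF
  calc lambdaS G' h ≤ (G'.edgeSet ∩ Sym2.map π ⁻¹' F₀).ncard :=
        lambdaS_le_ncard (hsplit.isHEdgeCut_preimage hF₀)
    _ ≤ t * F₀.ncard := hsplit.ncard_edgeSet_inter_preimage_le hF₀.1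
    _ = t * lambdaS G h := by rw [hcard]

/-- preimages of h-edge-cuts are h-edge-cuts of a t-split graph;
consequently λ_s^{(h)}(G^t) ≤ t·λ_s^{(h)}(G). -/
theorem split_edge_cut {V W : Type*} [Fintype V] [Fintype W]
    (G : SimpleGraph V) (t h : ℕ) (G' : SimpleGraph W) (π : W → V)
    (hsplit : IsSplitGraph G t G' π) (hconn : G.Connected)
    (F : Set (Sym2 V)) (hF : IsHEdgeCut G h F) :
    IsHEdgeCut G' h (G'.edgeSet ∩ (Sym2.map π) ⁻¹' F) ∧
      lambdaS G' h ≤ t * lambdaS G h :=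
  split_edge_cut_general G t h G' π hsplit F hF
end

section
/- For 2 ≤ k ≤ n−1 and n−k ≤ h ≤ n−2, the h-super connectivity of the (n,k)-star graph satisfies κ_s^{(h)}(S_{n,k}) ≤ (h+1)!(n−h−1)/(n−k)!. -/
open SimpleGraph

/-!
Put `m = n - 1 - h` and let `X = lastFixed n k h`, the arrangements whose last `m` positions hold
the `m` smallest symbols in order. A neighbour of `v` is obtained by exchanging the symbol `v 0`
with another symbol, so it is determined by its first digit. An edge leaves `X` only by bringing
one of the `m` small symbols to the front, hence the outer boundary `T` of `X` has at most
`m |X| ≤ m (h+1)!/(n-k)!` elements. Deleting `T` cuts `X` off from the rest. A vertex of `X` keeps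
the `h` neighbours obtained by fronting another large symbol; a vertex outside `X ∪ T` has at most
one neighbour in `T`, because the only fixed position where it carries a large symbol determines
that neighbour's first digit, so it keeps at least `n - 2 ≥ h` neighbours.
-/

namespace SimpleGraph

variable {V : Type*} (G : SimpleGraph V)

def outerBoundary (X : Set V) : Set V :=
  {w | w ∉ X ∧ ∃ x ∈ X, G.Adj x w}

variable {G}

theorem not_connected_induce_compl_outerBoundary {X : Set V} {a b : V} (ha : a ∈ X)
    (hbX : b ∉ X) (hb : b ∉ G.outerBoundary X) :
    ¬ (G.induce (G.outerBoundary X)ᶜ).Connected := by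
  intro hconn
  obtain ⟨p⟩ := hconn.preconnected ⟨a, fun h => h.1 ha⟩ ⟨b, hb⟩
  obtain ⟨d, -, hd₁, hd₂⟩ := p.exists_boundary_dart {u | u.val ∈ X} ha hbX
  exact d.snd.2 ⟨hd₂, _, hd₁, d.adj⟩

theorem kappaS_le_ncard {h : ℕ} {T : Set V} (hT : IsHVertexCut G h T) : kappaS G h ≤ T.ncard :=
  Nat.sInf_le ⟨T, hT, rfl⟩

end SimpleGraph

theorem Fin.ncard_setOf_val_lt {n m : ℕ} (hm : m ≤ n) : {a : Fin n | a.val < m}.ncard = m := by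
  rw [Set.ncard_eq_toFinset_card', Set.toFinset_ofPred, Fin.card_filter_val_lt, min_eq_right hm]

theorem Fin.ncard_setOf_le_val (n m : ℕ) : {a : Fin n | m ≤ a.val}.ncard = n - m := by
  have hcompl : {a : Fin n | m ≤ a.val} = {a : Fin n | a.val < min m n}ᶜ := by
    ext a
    simp only [Set.mem_ofPred_eq, Set.mem_compl_iff, not_lt]
    omega
  rw [hcompl, Set.ncard_compl, Fin.ncard_setOf_val_lt (min_le_right _ _), Nat.card_eq_fintype_card,
    Fintype.card_fin]
  omega

section Arrangement

variable {n k : ℕ} [NeZero k]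

/-- Both moves of `S_{n,k}` exchange the symbol `v 0` with another symbol `a`: the one at
position `i` for a swap, an unused one for a replacement. -/
def headSwap (v : Fin k ↪ Fin n) (a : Fin n) : Fin k ↪ Fin n :=
  v.trans (Equiv.swap (v 0) a).toEmbedding

theorem headSwap_apply (v : Fin k ↪ Fin n) (a : Fin n) (j : Fin k) :
    headSwap v a j = Equiv.swap (v 0) a (v j) := rfl

@[simp] theorem headSwap_apply_zero (v : Fin k ↪ Fin n) (a : Fin n) : headSwap v a 0 = a := by
  simp [headSwap_apply]

theorem headSwap_headSwap (v : Fin k ↪ Fin n) (a : Fin n) : headSwap (headSwap v a) (v 0) = v := by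
  ext j
  simp [headSwap_apply, Equiv.swap_comm]

theorem eq_headSwap_of_swapAdj {v w : Fin k ↪ Fin n} (h : swapAdj v w) :
    w 0 ≠ v 0 ∧ w = headSwap v (w 0) := by
  obtain ⟨i, hi0, hw0, hwi, hw⟩ := h
  refine ⟨hw0 ▸ v.injective.ne hi0, ?_⟩
  ext j
  rw [headSwap_apply, hw0]
  rcases eq_or_ne j 0 with rfl | hj0
  · simp [hw0]
  rcases eq_or_ne j i with rfl | hji
  · simp [hwi]
  rw [hw j hj0 hji, Equiv.swap_apply_of_ne_of_ne (v.injective.ne hj0) (v.injective.ne hji)]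

theorem eq_headSwap_of_unswapAdj {v w : Fin k ↪ Fin n} (h : unswapAdj v w) :
    w 0 ≠ v 0 ∧ w = headSwap v (w 0) := by
  obtain ⟨hw, hfresh⟩ := h
  refine ⟨hfresh 0, ?_⟩
  ext j
  rw [headSwap_apply]
  rcases eq_or_ne j 0 with rfl | hj0
  · simp
  rw [hw j hj0, Equiv.swap_apply_of_ne_of_ne (v.injective.ne hj0) (hfresh j).symm]

theorem nkStar_adj_iff {v w : Fin k ↪ Fin n} :
    (nkStar n k).Adj v w ↔ w 0 ≠ v 0 ∧ w = headSwap v (w 0) := by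
  have symm : ∀ {v w : Fin k ↪ Fin n}, w 0 ≠ v 0 → w = headSwap v (w 0) →
      v 0 ≠ w 0 ∧ v = headSwap w (v 0) := by
    intro v w hne hw
    refine ⟨hne.symm, ?_⟩
    rw [hw, headSwap_headSwap]
  simp only [nkStar, fromRel_adj]
  constructor
  · rintro ⟨-, (h | h) | (h | h)⟩
    · exact eq_headSwap_of_swapAdj h
    · exact eq_headSwap_of_unswapAdj h
    · exact (eq_headSwap_of_swapAdj h).elim symm
    · exact (eq_headSwap_of_unswapAdj h).elim symm
  · rintro ⟨hne, hw⟩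
    refine ⟨fun h => hne (h ▸ rfl), Or.inl ?_⟩
    by_cases hmem : ∃ i, v i = w 0
    · obtain ⟨i, hi⟩ := hmem
      have hi0 : i ≠ 0 := by rintro rfl; exact hne hi.symm
      refine Or.inl ⟨i, hi0, hi.symm, ?_, fun j hj0 hji => ?_⟩
      · rw [hw, headSwap_apply, ← hi]; simp
      · rw [hw, headSwap_apply, ← hi,
          Equiv.swap_apply_of_ne_of_ne (v.injective.ne hj0) (v.injective.ne hji)]
    · push Not at hmem
      refine Or.inr ⟨fun j hj0 => ?_, fun j => (hmem j).symm⟩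
      rw [hw, headSwap_apply,
        Equiv.swap_apply_of_ne_of_ne (v.injective.ne hj0) (hmem j)]

theorem headSwap_injective (v : Fin k ↪ Fin n) : Function.Injective (headSwap v) :=
  fun a b h => by simpa using congrArg (· 0) h

theorem nkStar_adj_headSwap {v : Fin k ↪ Fin n} {a : Fin n} (ha : a ≠ v 0) :
    (nkStar n k).Adj v (headSwap v a) := by
  simpa [nkStar_adj_iff] using ha

theorem eq_of_nkStar_adj_of_apply_zero_eq {v w w' : Fin k ↪ Fin n} (hw : (nkStar n k).Adj v w)
    (hw' : (nkStar n k).Adj v w') (h : w 0 = w' 0) : w = w' := by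
  rw [(nkStar_adj_iff.1 hw).2, (nkStar_adj_iff.1 hw').2, h]

theorem nkStar_neighborSet (v : Fin k ↪ Fin n) :
    (nkStar n k).neighborSet v = headSwap v '' {v 0}ᶜ := by
  ext w
  simp only [mem_neighborSet, nkStar_adj_iff, Set.mem_image, Set.mem_compl_singleton_iff]
  constructor
  · rintro ⟨hne, hw⟩
    exact ⟨w 0, hne, hw.symm⟩
  · rintro ⟨a, ha, rfl⟩
    simpa using ha

theorem ncard_neighborSet_nkStar (v : Fin k ↪ Fin n) :
    ((nkStar n k).neighborSet v).ncard = n - 1 := by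
  rw [nkStar_neighborSet, Set.ncard_image_of_injective _ (headSwap_injective v),
    Set.ncard_compl, Set.ncard_singleton, Nat.card_eq_fintype_card, Fintype.card_fin]

end Arrangement

section LastFixed

variable {n k h : ℕ} {x : Fin k ↪ Fin n}

theorem val_lt_of_mem_lastFixed (hx : x ∈ lastFixed n k h) {j : Fin k}
    (hj : k - (n - 1 - h) ≤ j.val) : (x j).val < n - 1 - h := by
  have := hx j hj
  omega

theorem le_val_of_mem_lastFixed (hx : x ∈ lastFixed n k h) {j : Fin k}
    (hj : j.val < k - (n - 1 - h)) : n - 1 - h ≤ (x j).val := by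
  by_contra hlt
  have hp := hx ⟨k - (n - 1 - h) + (x j).val, by omega⟩ (Nat.le_add_right _ _)
  rw [Nat.add_sub_cancel_left] at hp
  have := congrArg Fin.val (x.injective (Fin.ext hp))
  simp only at this
  omega

theorem ncard_lastFixed_le :
    (lastFixed n k h).ncard ≤ (n - (n - 1 - h)).descFactorial (k - (n - 1 - h)) := by
  let S := {a : Fin n | n - 1 - h ≤ a.val}
  let restrict : lastFixed n k h → (Fin (k - (n - 1 - h)) ↪ S) := fun x =>
    ⟨fun j => ⟨x.1 (Fin.castLE (Nat.sub_le _ _) j), le_val_of_mem_lastFixed x.2 j.2⟩,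
      fun i j hij => Fin.castLE_injective _ (x.1.injective (congrArg Subtype.val hij))⟩
  have hrestrict : Function.Injective restrict := by
    intro x y hxy
    ext j : 2
    by_cases hj : j.val < k - (n - 1 - h)
    · exact congrArg Subtype.val (DFunLike.congr_fun hxy ⟨j, hj⟩)
    · push Not at hj
      exact Fin.ext ((x.2 j hj).trans (y.2 j hj).symm)
  calc (lastFixed n k h).ncard = Nat.card (lastFixed n k h) := (Nat.card_coe_set_eq _).symm
    _ ≤ Nat.card (Fin (k - (n - 1 - h)) ↪ S) := Nat.card_le_card_of_injective _ hrestrict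
    _ = _ := by
      rw [Nat.card_eq_fintype_card, Fintype.card_embedding_eq, Fintype.card_fin,
        ← Nat.card_eq_fintype_card, Nat.card_coe_set_eq, Fin.ncard_setOf_le_val]

variable [NeZero k]

theorem headSwap_mem_lastFixed (hm : n - 1 - h < k) (hx : x ∈ lastFixed n k h) {a : Fin n}
    (ha : n - 1 - h ≤ a.val) : headSwap x a ∈ lastFixed n k h := by
  intro j hj
  have hj0 : j ≠ 0 := by rintro rfl; simp at hj; omega
  have hxa : x j ≠ a := fun h => by have := val_lt_of_mem_lastFixed hx hj; omega
  rw [headSwap_apply, Equiv.swap_apply_of_ne_of_ne (x.injective.ne hj0) hxa]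
  exact hx j hj

theorem exists_eq_headSwap_of_mem_outerBoundary (hm : n - 1 - h < k) {w : Fin k ↪ Fin n}
    (hw : w ∈ (nkStar n k).outerBoundary (lastFixed n k h)) :
    ∃ x ∈ lastFixed n k h, ∃ t : Fin n, t.val < n - 1 - h ∧ w = headSwap x t := by
  obtain ⟨hwX, x, hx, hadj⟩ := hw
  have hw := (nkStar_adj_iff.1 hadj).2
  refine ⟨x, hx, w 0, ?_, hw⟩
  by_contra! hbig
  exact hwX (hw ▸ headSwap_mem_lastFixed hm hx hbig)

theorem exists_large_fixed_of_adj_outerBoundary (hm : n - 1 - h < k) {v w : Fin k ↪ Fin n}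
    (hv : v ∉ lastFixed n k h) (hw : w ∈ (nkStar n k).outerBoundary (lastFixed n k h))
    (hadj : (nkStar n k).Adj v w) :
    ∃ i : Fin k, k - (n - 1 - h) ≤ i.val ∧ (w 0).val = i.val - (k - (n - 1 - h)) ∧
      n - 1 - h ≤ (v i).val ∧
      ∀ j : Fin k, k - (n - 1 - h) ≤ j.val → j ≠ i → (v j).val < n - 1 - h := by
  obtain ⟨x, hx, t, ht, rfl⟩ := exists_eq_headSwap_of_mem_outerBoundary hm hw
  obtain ⟨hbt, hvw⟩ := nkStar_adj_iff.1 hadj.symm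
  generalize v 0 = b at hbt hvw
  subst hvw
  rw [headSwap_apply_zero] at hbt
  have hbx : b ≠ x 0 := by
    rintro rfl
    exact hv ((headSwap_headSwap x t).symm ▸ hx)
  have hx0 : n - 1 - h ≤ (x 0).val := le_val_of_mem_lastFixed hx (by simp; omega)
  let i : Fin k := ⟨k - (n - 1 - h) + t.val, by omega⟩
  have hxi : x i = t := Fin.ext (by have := hx i (Nat.le_add_right _ _); simp [i] at this ⊢; omega)
  refine ⟨i, Nat.le_add_right _ _, by simp [i], ?_, fun j hj hji => ?_⟩
  · have hx0t : x 0 ≠ t := fun h => by rw [Fin.ext_iff] at h; omega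
    rw [headSwap_apply, headSwap_apply_zero, headSwap_apply, hxi, Equiv.swap_apply_right,
      Equiv.swap_apply_of_ne_of_ne hx0t hbx.symm]
    exact hx0
  · have hxj := val_lt_of_mem_lastFixed hx hj
    have hxjt : x j ≠ t := hxi ▸ x.injective.ne hji
    have hxj0 : x j ≠ x 0 := x.injective.ne (by rintro rfl; simp at hj; omega)
    rw [headSwap_apply, headSwap_apply_zero, headSwap_apply,
      Equiv.swap_apply_of_ne_of_ne hxj0 hxjt, Equiv.swap_apply_def]
    split_ifs <;> omega

theorem ncard_neighborSet_inter_outerBoundary_le_one (hm : n - 1 - h < k)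
    {v : Fin k ↪ Fin n} (hv : v ∉ lastFixed n k h) :
    ((nkStar n k).neighborSet v ∩ (nkStar n k).outerBoundary (lastFixed n k h)).ncard ≤ 1 := by
  rw [Set.ncard_le_one_iff]
  rintro w w' ⟨hvw, hw⟩ ⟨hvw', hw'⟩
  obtain ⟨i, hi, hw0, hvi, hv_lt⟩ := exists_large_fixed_of_adj_outerBoundary hm hv hw hvw
  obtain ⟨i', hi', hw0', hvi', -⟩ := exists_large_fixed_of_adj_outerBoundary hm hv hw' hvw'
  obtain rfl : i' = i := by
    by_contra hne
    have := hv_lt i' hi' hne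
    omega
  exact eq_of_nkStar_adj_of_apply_zero_eq hvw hvw' (Fin.ext (hw0.trans hw0'.symm))

theorem le_ncard_neighborSet_diff_of_mem_lastFixed (hm : n - 1 - h < k)
    {v : Fin k ↪ Fin n} (hv : v ∈ lastFixed n k h) :
    n - (n - 1 - h) - 1 ≤
      ((nkStar n k).neighborSet v \ (nkStar n k).outerBoundary (lastFixed n k h)).ncard := by
  have hv0 : n - 1 - h ≤ (v 0).val := le_val_of_mem_lastFixed hv (by simp; omega)
  calc n - (n - 1 - h) - 1 = ({a : Fin n | n - 1 - h ≤ a.val} \ {v 0}).ncard := by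
        rw [Set.ncard_sdiff_singleton_of_mem (show v 0 ∈ {a : Fin n | n - 1 - h ≤ a.val} from hv0),
          Fin.ncard_setOf_le_val]
    _ ≤ _ := by
      refine Set.ncard_le_ncard_of_injOn (headSwap v) ?_ (headSwap_injective v).injOn
      rintro a ⟨ha, hav⟩
      exact ⟨nkStar_adj_headSwap hav, fun hT => hT.1 (headSwap_mem_lastFixed hm hv ha)⟩

theorem le_ncard_neighborSet_diff_of_not_mem_lastFixed (hm : n - 1 - h < k)
    {v : Fin k ↪ Fin n} (hv : v ∉ lastFixed n k h) :
    n - 2 ≤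
      ((nkStar n k).neighborSet v \ (nkStar n k).outerBoundary (lastFixed n k h)).ncard := by
  have := Set.ncard_inter_add_ncard_sdiff_eq_ncard ((nkStar n k).neighborSet v)
    ((nkStar n k).outerBoundary (lastFixed n k h))
  have := ncard_neighborSet_inter_outerBoundary_le_one hm hv
  rw [ncard_neighborSet_nkStar] at *
  omega

theorem exists_mem_lastFixed (hkn : k ≤ n) (hm : n - 1 - h < k) :
    ∃ a ∈ lastFixed n k h, (a 0).val = n - 1 - h := by
  let a : Fin k ↪ Fin n :=
    (Equiv.addRight (⟨n - 1 - h, hm⟩ : Fin k)).toEmbedding.trans (Fin.castLEEmb hkn)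
  have ha : ∀ j, (a j).val = (j.val + (n - 1 - h)) % k := fun j => by simp [a, Fin.val_add]
  refine ⟨a, fun j hj => ?_, by simp [ha, Nat.mod_eq_of_lt hm]⟩
  rw [ha, show j.val + (n - 1 - h) = j.val - (k - (n - 1 - h)) + k by omega, Nat.add_mod_right,
    Nat.mod_eq_of_lt (by omega)]

theorem exists_not_mem_lastFixed_not_mem_outerBoundary (hkn : k < n) (hm₀ : 0 < n - 1 - h)
    (hm : n - 1 - h < k) :
    ∃ b, b ∉ lastFixed n k h ∧ b ∉ (nkStar n k).outerBoundary (lastFixed n k h) := by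
  obtain ⟨a, ha, ha0⟩ := exists_mem_lastFixed hkn.le hm
  let last : Fin k := ⟨k - 1, by omega⟩
  have ha_last : (a last).val = n - 1 - h - 1 := by
    have := ha last (by simp [last]; omega)
    have : last.val = k - 1 := rfl
    omega
  let σ := Equiv.swap (a last) ⟨k, hkn⟩
  have hσ0 : σ (a 0) = a 0 :=
    Equiv.swap_apply_of_ne_of_ne (fun h => by rw [Fin.ext_iff] at h; omega)
      (fun h => by rw [Fin.ext_iff] at h; simp at h; omega)
  refine ⟨a.trans σ.toEmbedding, fun hb => ?_, fun hb => ?_⟩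
  · have := hb last (by simp [last]; omega)
    simp [σ, last] at this
    omega
  · obtain ⟨x, -, t, ht, hbx⟩ := exists_eq_headSwap_of_mem_outerBoundary hm hb
    have := congrArg (fun e => (e 0).val) hbx
    simp [hσ0, ha0] at this
    omega

theorem isHVertexCut_outerBoundary_lastFixed (hkn : k < n) (hm₀ : 0 < n - 1 - h)
    (hm : n - 1 - h < k) :
    IsHVertexCut (nkStar n k) h ((nkStar n k).outerBoundary (lastFixed n k h)) := by
  obtain ⟨a, ha, -⟩ := exists_mem_lastFixed hkn.le hm
  obtain ⟨b, hbX, hbT⟩ := exists_not_mem_lastFixed_not_mem_outerBoundary hkn hm₀ hm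
  refine ⟨not_connected_induce_compl_outerBoundary ha hbX hbT, fun v _ => ?_⟩
  by_cases hv : v ∈ lastFixed n k h
  · exact le_trans (by omega) (le_ncard_neighborSet_diff_of_mem_lastFixed hm hv)
  · exact le_trans (by omega) (le_ncard_neighborSet_diff_of_not_mem_lastFixed hm hv)

theorem ncard_outerBoundary_lastFixed_le (hm : n - 1 - h < k) :
    ((nkStar n k).outerBoundary (lastFixed n k h)).ncard ≤
      (lastFixed n k h).ncard * (n - 1 - h) := by
  have hsub : (nkStar n k).outerBoundary (lastFixed n k h) ⊆
      (fun p => headSwap p.1 p.2) '' (lastFixed n k h ×ˢ {t : Fin n | t.val < n - 1 - h}) := by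
    intro w hw
    obtain ⟨x, hx, t, ht, rfl⟩ := exists_eq_headSwap_of_mem_outerBoundary hm hw
    exact ⟨(x, t), ⟨hx, ht⟩, rfl⟩
  calc _ ≤ _ := Set.ncard_le_ncard hsub
    _ ≤ _ := Set.ncard_image_le
    _ = _ := by rw [Set.ncard_prod, Fin.ncard_setOf_val_lt (by omega)]

end LastFixed

theorem descFactorial_mul_eq_factorial_mul_div {n k h : ℕ} (hkn : k < n) (h1 : n - k ≤ h)
    (h2 : h ≤ n - 2) :
    (n - (n - 1 - h)).descFactorial (k - (n - 1 - h)) * (n - 1 - h) =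
      (h + 1).factorial * (n - h - 1) / (n - k).factorial := by
  rw [show n - (n - 1 - h) = h + 1 by omega, show n - 1 - h = n - h - 1 by omega,
    Nat.descFactorial_eq_div (by omega), show h + 1 - (k - (n - h - 1)) = n - k by omega,
    Nat.div_mul_right_comm (Nat.factorial_dvd_factorial (by omega))]

/-- κ_s^{(h)}(S_{n,k}) ≤ (h+1)!(n-h-1)/(n-k)! for
2 ≤ k ≤ n-1 and n-k ≤ h ≤ n-2. -/
theorem kappa_upper (n k h : ℕ) (hk2 : 2 ≤ k) (hk : k ≤ n - 1)
    (h1 : n - k ≤ h) (h2 : h ≤ n - 2) :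
    kappaS (@nkStar n k ⟨by omega⟩) h
      ≤ (h + 1).factorial * (n - h - 1) / (n - k).factorial := by
  have : NeZero k := ⟨by omega⟩
  have hm : n - 1 - h < k := by omega
  calc kappaS (nkStar n k) h ≤ ((nkStar n k).outerBoundary (lastFixed n k h)).ncard :=
        kappaS_le_ncard (isHVertexCut_outerBoundary_lastFixed (by omega) (by omega) hm)
    _ ≤ (lastFixed n k h).ncard * (n - 1 - h) := ncard_outerBoundary_lastFixed_le hm
    _ ≤ (n - (n - 1 - h)).descFactorial (k - (n - 1 - h)) * (n - 1 - h) :=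
        Nat.mul_le_mul_right _ ncard_lastFixed_le
    _ = _ := descFactorial_mul_eq_factorial_mul_div (by omega) h1 h2
end
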